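/- arXiv:1710.11005 — 6 statements merged into one kernel-verified Lean document; each statement's English description precedes it below -/
import Mathlib

section
/- Suppose m(s) = f₀ + gᵀs + (1/2)sᵀHs is a quadratic model with g ∈ ℝⁿ, H symmetric, and a step s satisfies the Cauchy decrease condition m(0) − m(s) ≥ c₁‖g‖ min(Δ, ‖g‖/max(‖H‖,1)) for some c₁ ∈ [1/2, 1] and Δ > 0. Then ‖s‖ ≥ (2c₁/(1 + √(1+2c₁))) · min(Δ, ‖g‖/max(‖H‖,1)). -/
open scoped RealInnerProductSpace

/-- If the quadratic model `m(s) = f₀ + gᵀs + (1/2)sᵀHs` (with `H` symmetric) and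
the step `s` satisfies the Cauchy decrease condition with `c₁ ∈ [1/2, 1]`, then
`‖s‖ ≥ (2c₁/(1 + √(1+2c₁))) · min(Δ, ‖g‖/max(‖H‖,1))`. -/
theorem dfogn_cauchy_step_size {n : ℕ}
    (f₀ : ℝ) (g s : EuclideanSpace ℝ (Fin n))
    (H : EuclideanSpace ℝ (Fin n) →L[ℝ] EuclideanSpace ℝ (Fin n))
    (hH : IsSelfAdjoint H)
    (m : EuclideanSpace ℝ (Fin n) → ℝ)
    (hm : ∀ v, m v = f₀ + ⟪g, v⟫ + (1 / 2) * ⟪v, H v⟫)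
    (c₁ Δ : ℝ) (hc₁ : c₁ ∈ Set.Icc (1 / 2 : ℝ) 1) (hΔ : 0 < Δ)
    (hdec : m 0 - m s ≥ c₁ * ‖g‖ * min Δ (‖g‖ / max ‖H‖ 1)) :
    ‖s‖ ≥ (2 * c₁ / (1 + Real.sqrt (1 + 2 * c₁))) * min Δ (‖g‖ / max ‖H‖ 1) := by
  obtain ⟨hc₁l, hc₁u⟩ := hc₁
  set M : ℝ := max ‖H‖ 1 with hM
  have hM1 : (1 : ℝ) ≤ M := le_max_right _ _
  have hM0 : (0 : ℝ) < M := lt_of_lt_of_le one_pos hM1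
  set t : ℝ := min Δ (‖g‖ / M) with ht
  -- basic bound: c₁ ‖g‖ t ≤ ‖g‖‖s‖ + (1/2) M ‖s‖^2
  have hm0 : m 0 = f₀ := by
    simp [hm]
  have hkey : c₁ * ‖g‖ * t ≤ ‖g‖ * ‖s‖ + (1 / 2) * (M * ‖s‖ ^ 2) := by
    have h1 : |⟪g, s⟫| ≤ ‖g‖ * ‖s‖ := abs_real_inner_le_norm g s
    have h2 : |⟪s, H s⟫| ≤ ‖H‖ * ‖s‖ ^ 2 := by
      calc |⟪s, H s⟫| ≤ ‖s‖ * ‖H s‖ := abs_real_inner_le_norm s (H s)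
        _ ≤ ‖s‖ * (‖H‖ * ‖s‖) := by
            exact mul_le_mul_of_nonneg_left (H.le_opNorm s) (norm_nonneg s)
        _ = ‖H‖ * ‖s‖ ^ 2 := by ring
    have hHM : ‖H‖ ≤ M := le_max_left _ _
    have h3 : ‖H‖ * ‖s‖ ^ 2 ≤ M * ‖s‖ ^ 2 :=
      mul_le_mul_of_nonneg_right hHM (sq_nonneg _)
    have hdec' : c₁ * ‖g‖ * t ≤ -⟪g, s⟫ - (1 / 2) * ⟪s, H s⟫ := by
      have := hdec
      rw [hm0, hm s] at this
      linarith
    have habs1 : -⟪g, s⟫ ≤ ‖g‖ * ‖s‖ := by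
      have := neg_abs_le ⟪g, s⟫; linarith
    have habs2 : -⟪s, H s⟫ ≤ ‖H‖ * ‖s‖ ^ 2 := by
      have := neg_abs_le ⟪s, H s⟫; linarith
    linarith
  rcases eq_or_ne g 0 with hg | hg
  · have : t = 0 := by
      simp [ht, hg, hΔ.le]
    rw [this, mul_zero]
    exact norm_nonneg s
  · have hgn : (0 : ℝ) < ‖g‖ := norm_pos_iff.mpr hg
    have htpos : 0 < t := lt_min hΔ (div_pos hgn hM0)
    have hMt : M * t ≤ ‖g‖ := by
      have : t ≤ ‖g‖ / M := min_le_right _ _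
      calc M * t ≤ M * (‖g‖ / M) := mul_le_mul_of_nonneg_left this hM0.le
        _ = ‖g‖ := by field_simp
    set r : ℝ := Real.sqrt (1 + 2 * c₁) with hr
    have hrsq : r ^ 2 = 1 + 2 * c₁ := Real.sq_sqrt (by linarith)
    have hr1 : 1 < r := by
      nlinarith [Real.sqrt_nonneg (1 + 2 * c₁)]
    have halpha : 2 * c₁ / (1 + r) = r - 1 := by
      rw [div_eq_iff (by linarith : (1 : ℝ) + r ≠ 0)]
      nlinarith
    rw [halpha]
    set α : ℝ := r - 1 with hα
    have hαpos : 0 < α := by linarith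
    have hαc : α + α ^ 2 / 2 = c₁ := by
      have : α ^ 2 = r ^ 2 - 2 * r + 1 := by ring
      nlinarith
    by_contra hcon
    push_neg at hcon
    have hs0 : 0 ≤ ‖s‖ := norm_nonneg s
    have h4 : ‖g‖ * ‖s‖ < ‖g‖ * (α * t) := mul_lt_mul_of_pos_left hcon hgn
    have h5 : M * ‖s‖ ^ 2 ≤ M * (α * t) ^ 2 := by
      have : ‖s‖ ^ 2 ≤ (α * t) ^ 2 := by nlinarith
      exact mul_le_mul_of_nonneg_left this hM0.le
    have h6 : M * (α * t) ^ 2 ≤ ‖g‖ * α ^ 2 * t := by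
      have : M * (α * t) ^ 2 = (M * t) * (α ^ 2 * t) := by ring
      rw [this]
      have hnn : 0 ≤ α ^ 2 * t := by positivity
      calc (M * t) * (α ^ 2 * t) ≤ ‖g‖ * (α ^ 2 * t) :=
            mul_le_mul_of_nonneg_right hMt hnn
        _ = ‖g‖ * α ^ 2 * t := by ring
    have hEq : c₁ * ‖g‖ * t = ‖g‖ * (α * t) + (1 / 2) * (‖g‖ * α ^ 2 * t) := by
      rw [← hαc]; ring
    clear_value α r t M
    have hlt : c₁ * ‖g‖ * t < c₁ * ‖g‖ * t := by
      calc c₁ * ‖g‖ * t ≤ ‖g‖ * ‖s‖ + (1 / 2) * (M * ‖s‖ ^ 2) := hkey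
        _ < ‖g‖ * (α * t) + (1 / 2) * (M * ‖s‖ ^ 2) := by linarith
        _ ≤ ‖g‖ * (α * t) + (1 / 2) * (‖g‖ * α ^ 2 * t) := by linarith
        _ = c₁ * ‖g‖ * t := hEq.symm
    exact lt_irrefl _ hlt
end

section
/- Let h ≥ 1, g ≥ 0, c₁ > 0, Δ > 0, and suppose t ≥ 0 satisfies (1/2)t² + (g/h)t − c₁(g/h)·min(Δ, g/h) ≥ 0. Then t ≥ (2c₁/(1 + √(1+2c₁))) · min(Δ, g/h). -/
/-- scalar quadratic-inequality core of the Cauchy-step lower bound. -/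
theorem dfogn_scalar_quadratic_bound
    (h g c₁ Δ t : ℝ) (hh : 1 ≤ h) (hg : 0 ≤ g) (hc₁ : 0 < c₁) (hΔ : 0 < Δ) (ht : 0 ≤ t)
    (hineq : (1 / 2) * t ^ 2 + (g / h) * t - c₁ * (g / h) * min Δ (g / h) ≥ 0) :
    t ≥ (2 * c₁ / (1 + Real.sqrt (1 + 2 * c₁))) * min Δ (g / h) := by
  set s := Real.sqrt (1 + 2 * c₁) with hs
  have hs2 : s ^ 2 = 1 + 2 * c₁ := Real.sq_sqrt (by linarith)
  have hs0 : 0 ≤ s := Real.sqrt_nonneg _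
  have hs1 : 1 ≤ s := by nlinarith
  have hsle : s ≤ 1 + c₁ := by nlinarith
  have hga : 0 ≤ g / h := div_nonneg hg (by linarith)
  have hm : 0 ≤ min Δ (g / h) := le_min hΔ.le hga
  have hma : min Δ (g / h) ≤ g / h := min_le_right _ _
  have hK : 2 * c₁ / (1 + s) = s - 1 := by
    field_simp
    nlinarith
  rw [hK]
  by_contra hcon
  push_neg at hcon
  set m := min Δ (g / h) with hmdef
  have hsm : (s - 1) ^ 2 = 2 * c₁ - 2 * (s - 1) := by nlinarith
  have hsm2 : ((s - 1) * m) ^ 2 = (2 * c₁ - 2 * (s - 1)) * m ^ 2 := by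
    rw [mul_pow, hsm]
  have h2 : t ^ 2 < ((s - 1) * m) ^ 2 := by
    rw [sq, sq]; exact mul_self_lt_mul_self ht hcon
  have h3 : (g / h) * t ≤ (g / h) * ((s - 1) * m) :=
    mul_le_mul_of_nonneg_left hcon.le hga
  have h4 : 0 ≤ (c₁ - (s - 1)) * m * (g / h - m) :=
    mul_nonneg (mul_nonneg (by linarith) hm) (by linarith)
  nlinarith [hineq, h2, h3, h4, hsm2]
end

section
/- Suppose f and a model m satisfy the fully linear bound |f(x_k + s) − m(s)| ≤ κ_ef Δ² for all ‖s‖ ≤ Δ, suppose m(0) = f(x_k), and suppose the step s_k with ‖s_k‖ ≤ Δ satisfies m(0) − m(s_k) ≥ c₁‖g‖ Δ where g = ∇m(0), c₁ > 0, and ‖g‖ > 0. If Δ ≤ c₁(1 − η)‖g‖/(2κ_ef) for some η ∈ (0,1), then the trust-region ratio r = (f(x_k) − f(x_k + s_k))/(m(0) − m(s_k)) satisfies r ≥ η. -/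
/-- if the model is fully linear with constant `κef`, `m 0 = f x`, the step
satisfies a Cauchy-type decrease `m 0 - m s ≥ c₁‖g‖Δ`, and
`Δ ≤ c₁(1-η)‖g‖/(2κef)`, then the trust-region ratio is at least `η`. -/
theorem dfogn_very_successful {n : ℕ}
    (f m : EuclideanSpace ℝ (Fin n) → ℝ) (x s : EuclideanSpace ℝ (Fin n))
    (Δ κef c₁ η : ℝ)
    (hκef : 0 < κef) (hc₁ : 0 < c₁) (hη : η ∈ Set.Ioo (0 : ℝ) 1) (hΔ : 0 < Δ)
    (hfl : ∀ v : EuclideanSpace ℝ (Fin n), ‖v‖ ≤ Δ → |f (x + v) - m v| ≤ κef * Δ ^ 2)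
    (hm0 : m 0 = f x)
    (hs : ‖s‖ ≤ Δ)
    (hg : 0 < ‖gradient m 0‖)
    (hdec : m 0 - m s ≥ c₁ * ‖gradient m 0‖ * Δ)
    (hΔle : Δ ≤ c₁ * (1 - η) * ‖gradient m 0‖ / (2 * κef)) :
    (f x - f (x + s)) / (m 0 - m s) ≥ η := by
  obtain ⟨hη0, hη1⟩ := hη
  set g := ‖gradient m 0‖ with hgdef
  have hDpos : 0 < m 0 - m s := lt_of_lt_of_le (by positivity) hdec
  have herr : |f (x + s) - m s| ≤ κef * Δ ^ 2 := hfl s hs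
  have h1 : m s - f (x + s) ≥ -(κef * Δ ^ 2) := by
    have := abs_le.mp herr
    linarith [this.1, this.2]
  -- κef * Δ² ≤ (1-η)/2 * (c₁ g Δ) ≤ (1-η)(m0 - ms)
  have h2 : κef * Δ ≤ c₁ * (1 - η) * g / 2 := by
    have := mul_le_mul_of_nonneg_left hΔle (le_of_lt hκef)
    calc κef * Δ ≤ κef * (c₁ * (1 - η) * g / (2 * κef)) := this
      _ = c₁ * (1 - η) * g / 2 := by field_simp
  have h3 : κef * Δ ^ 2 ≤ (1 - η) * (m 0 - m s) := by
    have h4 : κef * Δ ^ 2 ≤ c₁ * (1 - η) * g / 2 * Δ := by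
      have := mul_le_mul_of_nonneg_right h2 hΔ.le
      nlinarith
    have h5 : c₁ * (1 - η) * g / 2 * Δ ≤ (1 - η) * (m 0 - m s) := by
      have hgΔ : (1 - η) * (c₁ * g * Δ) ≤ (1 - η) * (m 0 - m s) :=
        mul_le_mul_of_nonneg_left hdec (by linarith)
      nlinarith
    linarith
  rw [ge_iff_le, le_div_iff₀ hDpos]
  nlinarith
end

section
/- Let f, m : ℝⁿ → ℝ with ‖∇f(x_k) − g‖ ≤ κ_eg Δ where g = ∇m(0). If ‖∇f(x_k)‖ ≥ ε and Δ ≤ (κ_eg + 2κ_ef/(c₁(1−η)))⁻¹ ε, then Δ ≤ c₁(1−η)‖g‖/(2κ_ef). -/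
/-- if `‖∇f(x) − g‖ ≤ κeg Δ`, `‖∇f(x)‖ ≥ ε` and
`Δ ≤ (κeg + 2κef/(c₁(1−η)))⁻¹ ε`, then `Δ ≤ c₁(1−η)‖g‖/(2κef)`. -/
theorem dfogn_small_radius_model_gradient {n : ℕ}
    (f m : EuclideanSpace ℝ (Fin n) → ℝ) (x : EuclideanSpace ℝ (Fin n))
    (Δ κef κeg c₁ η ε : ℝ)
    (hκef : 0 < κef) (hκeg : 0 < κeg) (hc₁ : 0 < c₁) (hη : η ∈ Set.Ioo (0 : ℝ) 1)
    (hε : 0 < ε) (hΔpos : 0 < Δ)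
    (herr : ‖gradient f x - gradient m 0‖ ≤ κeg * Δ)
    (hgrad : ‖gradient f x‖ ≥ ε)
    (hΔ : Δ ≤ (κeg + 2 * κef / (c₁ * (1 - η)))⁻¹ * ε) :
    Δ ≤ c₁ * (1 - η) * ‖gradient m 0‖ / (2 * κef) := by
  obtain ⟨hη0, hη1⟩ := hη
  have ha : 0 < c₁ * (1 - η) := mul_pos hc₁ (by linarith)
  have hsum : 0 < κeg + 2 * κef / (c₁ * (1 - η)) := add_pos hκeg (div_pos (by linarith) ha)
  have h1 : ε - κeg * Δ ≤ ‖gradient m 0‖ := by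
    have := norm_sub_norm_le (gradient f x) (gradient m 0)
    linarith [norm_sub_norm_le (gradient f x) (gradient m 0)]
  have h2 : Δ * (κeg + 2 * κef / (c₁ * (1 - η))) ≤ ε := by
    rw [← le_div_iff₀ hsum, div_eq_inv_mul]; exact hΔ
  rw [le_div_iff₀ (by positivity : (0:ℝ) < 2 * κef)]
  have h3 : Δ * (2 * κef / (c₁ * (1 - η))) ≤ ‖gradient m 0‖ := by nlinarith
  calc Δ * (2 * κef) = Δ * (2 * κef / (c₁ * (1 - η))) * (c₁ * (1 - η)) := by
        field_simp
    _ ≤ ‖gradient m 0‖ * (c₁ * (1 - η)) := by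
        exact mul_le_mul_of_nonneg_right h3 ha.le
    _ = c₁ * (1 - η) * ‖gradient m 0‖ := by ring
end

section
/- Let x_k ∈ ℝⁿ, Δ > 0, and interpolation points y₁,…,y_n with W the matrix whose t-th row is (y_t − x_k)ᵀ/Δ, assumed invertible. Let J_k ∈ ℝᵐˣⁿ satisfy J_k(y_t − x_k) = r(y_t) − r(x_k) for all t, and suppose ‖r(y_t) − r(x_k) − J(x_k)(y_t − x_k)‖ ≤ (L_J/2)Δ² for each t. Then ‖J_k − J(x_k)‖ ≤ (L_J/2)√n ‖W⁻¹‖ Δ. -/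
/-!
Write `E = J_k - J(x_k)`. By interpolation, `E (y_t - x_k) = r(y_t) - r(x_k) - J(x_k)(y_t - x_k)`,
so the `t`-th column of `E Wᵀ`, namely `E (y_t - x_k) / Δ`, has norm at most `(L_J/2) Δ`.
The spectral norm is bounded by the Frobenius norm, hence `‖E Wᵀ‖ ≤ √n (L_J/2) Δ`, and
`‖E‖ ≤ ‖E Wᵀ‖ ‖W⁻ᵀ‖` with `‖W⁻ᵀ‖ = ‖W⁻¹‖`.
-/

open scoped Matrix

open scoped Matrix.Norms.L2Operator

/-- The Euclidean norm of a vector in `Fin k → ℝ`. -/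
noncomputable def euclNorm {k : ℕ} (v : Fin k → ℝ) : ℝ :=
  ‖(WithLp.equiv 2 (Fin k → ℝ)).symm v‖

open WithLp

namespace Matrix

theorem transpose_mul_transpose_apply {l m n α : Type*} [Fintype n] [NonUnitalNonAssocSemiring α]
    (A : Matrix m n α) (B : Matrix l n α) (j : l) : (A * Bᵀ)ᵀ j = A *ᵥ B j := by
  ext i
  simp [mul_apply, mulVec, dotProduct]

variable {m n : Type*} [Fintype m] [Fintype n] [DecidableEq n]

/-- The right-hand side is the Frobenius norm of `A`. -/
theorem l2_opNorm_le_sqrt_sum_sq_norm_col (A : Matrix m n ℝ) :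
    ‖A‖ ≤ √(∑ j, ‖toLp 2 (Aᵀ j)‖ ^ 2) := by
  rw [l2_opNorm_def]
  refine ContinuousLinearMap.opNorm_le_bound _ (by positivity) fun x => ?_
  have hcols : toLp 2 (A *ᵥ ofLp x) = ∑ j, x j • toLp 2 (Aᵀ j) := by
    ext i
    simp [mulVec, dotProduct, mul_comm]
  calc ‖toLp 2 (A *ᵥ ofLp x)‖ ≤ ∑ j, ‖x j‖ * ‖toLp 2 (Aᵀ j)‖ := by
        rw [hcols]
        exact (norm_sum_le _ _).trans_eq (by simp only [norm_smul])
    _ ≤ √(∑ j, ‖x j‖ ^ 2) * √(∑ j, ‖toLp 2 (Aᵀ j)‖ ^ 2) := Real.sum_mul_le_sqrt_mul_sqrt _ _ _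
    _ = √(∑ j, ‖toLp 2 (Aᵀ j)‖ ^ 2) * ‖x‖ := by rw [EuclideanSpace.norm_eq, mul_comm]

theorem l2_opNorm_le_sqrt_card_mul_of_norm_col_le (A : Matrix m n ℝ) {c : ℝ}
    (hA : ∀ j, ‖toLp 2 (Aᵀ j)‖ ≤ c) : ‖A‖ ≤ √(Fintype.card n) * c := by
  refine (l2_opNorm_le_sqrt_sum_sq_norm_col A).trans ?_
  cases isEmpty_or_nonempty n with
  | inl _ => simp
  | inr hn =>
    have hc : 0 ≤ c := (norm_nonneg _).trans (hA hn.some)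
    calc √(∑ j, ‖toLp 2 (Aᵀ j)‖ ^ 2) ≤ √(∑ _j : n, c ^ 2) := by
          gcongr with j
          exact hA j
      _ = √(Fintype.card n) * c := by
          rw [Finset.sum_const, Finset.card_univ, nsmul_eq_mul, Real.sqrt_mul (by positivity),
            Real.sqrt_sq hc]

theorem l2_opNorm_transpose [DecidableEq m] (A : Matrix m n ℝ) : ‖Aᵀ‖ = ‖A‖ := by
  rw [← conjTranspose_eq_transpose_of_trivial, l2_opNorm_conjTranspose]

theorem l2_opNorm_le_norm_mul_mul_norm_inv (A : Matrix m n ℝ)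
    {B : Matrix n n ℝ} (hB : IsUnit B.det) : ‖A‖ ≤ ‖A * B‖ * ‖B⁻¹‖ :=
  calc ‖A‖ = ‖A * B * B⁻¹‖ := by rw [Matrix.mul_assoc, mul_nonsing_inv _ hB, Matrix.mul_one]
    _ ≤ ‖A * B‖ * ‖B⁻¹‖ := l2_opNorm_mul _ _

end Matrix

open Matrix

/-- error bound for the interpolated Jacobian:
`‖J_k − J(x_k)‖ ≤ (L_J/2) √n ‖W⁻¹‖ Δ`, where `W` has rows `(y_t − x_k)ᵀ/Δ`.
Matrix norms are L2 operator (spectral) norms. -/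
theorem dfogn_interp_jacobian_error {n m : ℕ}
    (r : (Fin n → ℝ) → (Fin m → ℝ))
    (xk : Fin n → ℝ) (Δ LJ : ℝ) (hΔ : 0 < Δ)
    (y : Fin n → (Fin n → ℝ))
    (W : Matrix (Fin n) (Fin n) ℝ)
    (hWdef : ∀ t j, W t j = (y t j - xk j) / Δ)
    (hW : IsUnit W.det)
    (Jk Jx : Matrix (Fin m) (Fin n) ℝ)
    (hinterp : ∀ t, Jk *ᵥ (y t - xk) = r (y t) - r xk)
    (htaylor : ∀ t, euclNorm (r (y t) - r xk - Jx *ᵥ (y t - xk)) ≤ LJ / 2 * Δ ^ 2) :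
    ‖Jk - Jx‖ ≤ LJ / 2 * Real.sqrt n * ‖W⁻¹‖ * Δ := by
  have hcol : ∀ t, ‖toLp 2 (((Jk - Jx) * Wᵀ)ᵀ t)‖ ≤ LJ / 2 * Δ := by
    intro t
    have hWt : W t = Δ⁻¹ • (y t - xk) := by
      ext j
      simp [hWdef, div_eq_inv_mul]
    rw [transpose_mul_transpose_apply, hWt, mulVec_smul, sub_mulVec, hinterp, toLp_smul,
      norm_smul, Real.norm_of_nonneg (by positivity)]
    calc Δ⁻¹ * ‖toLp 2 (r (y t) - r xk - Jx *ᵥ (y t - xk))‖ ≤ Δ⁻¹ * (LJ / 2 * Δ ^ 2) := by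
          gcongr
          exact htaylor t
      _ = LJ / 2 * Δ := by field_simp
  calc ‖Jk - Jx‖ ≤ ‖(Jk - Jx) * Wᵀ‖ * ‖Wᵀ⁻¹‖ :=
        l2_opNorm_le_norm_mul_mul_norm_inv _ (by rwa [det_transpose])
    _ ≤ √n * (LJ / 2 * Δ) * ‖W⁻¹‖ := by
        rw [← transpose_nonsing_inv, l2_opNorm_transpose]
        gcongr
        simpa using l2_opNorm_le_sqrt_card_mul_of_norm_col_le _ hcol
    _ = LJ / 2 * Real.sqrt n * ‖W⁻¹‖ * Δ := by ring
end

section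
/- Suppose ‖∇f(x_k)‖ ≥ ε > 0, the model satisfies ‖∇f(x_k) − g_k^{(i)}‖ ≤ κ_eg (ω^{i−1} Δ) for each inner iteration i of the criticality loop, and the loop does not terminate at iteration i, i.e., ω^{i−1}Δ > μ‖g_k^{(i)}‖ with μ > 0, ω ∈ (0,1). Then ω^{i−1} ≥ ε / ((κ_eg + 1/μ)Δ), and hence the criticality loop terminates after at most 1 + (1/|log ω|)·log((κ_eg + 1/μ)Δ/ε) iterations. -/
/-- criticality-loop bound: if the loop does not terminate at inner iteration `i`,
then `ω^{i−1} ≥ ε/((κ_eg + 1/μ)Δ)`, and hence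
`i ≤ 1 + (1/|log ω|) log((κ_eg + 1/μ)Δ/ε)`. -/
theorem dfogn_criticality_termination {n : ℕ}
    (gradf gi : EuclideanSpace ℝ (Fin n))
    (ε κeg μ ω Δ : ℝ) (i : ℕ) (hi : 1 ≤ i)
    (hε : 0 < ε) (hκ : 0 < κeg) (hμ : 0 < μ) (hω : ω ∈ Set.Ioo (0 : ℝ) 1) (hΔ : 0 < Δ)
    (herr : ‖gradf - gi‖ ≤ κeg * (ω ^ (i - 1) * Δ))
    (hgrad : ‖gradf‖ ≥ ε)
    (hnoterm : ω ^ (i - 1) * Δ > μ * ‖gi‖) :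
    ω ^ (i - 1) ≥ ε / ((κeg + 1 / μ) * Δ) ∧
      (i : ℝ) ≤ 1 + (1 / |Real.log ω|) * Real.log ((κeg + 1 / μ) * Δ / ε) := by
  obtain ⟨hω0, hω1⟩ := hω
  set C : ℝ := (κeg + 1 / μ) * Δ with hC
  have hCpos : 0 < C := by positivity
  have hpow : 0 < ω ^ (i - 1) := pow_pos hω0 _
  have hgi : ‖gi‖ ≤ (1 / μ) * (ω ^ (i - 1) * Δ) := by
    rw [div_mul_eq_mul_div, one_mul, le_div_iff₀ hμ, mul_comm]
    exact hnoterm.le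
  have hkey : ε ≤ C * ω ^ (i - 1) := by
    have htri : ‖gradf‖ ≤ ‖gradf - gi‖ + ‖gi‖ := by
      calc ‖gradf‖ = ‖(gradf - gi) + gi‖ := by rw [sub_add_cancel]
        _ ≤ ‖gradf - gi‖ + ‖gi‖ := norm_add_le _ _
    have := le_trans hgrad (le_trans htri (add_le_add herr hgi))
    calc ε ≤ κeg * (ω ^ (i - 1) * Δ) + (1 / μ) * (ω ^ (i - 1) * Δ) := this
      _ = C * ω ^ (i - 1) := by rw [hC]; ring
  have h1 : ω ^ (i - 1) ≥ ε / C := (div_le_iff₀ hCpos).mpr (by linarith [hkey])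
  refine ⟨h1, ?_⟩
  have hlogω : Real.log ω < 0 := Real.log_neg hω0 hω1
  have habs : |Real.log ω| = -Real.log ω := abs_of_neg hlogω
  have heC : ε / C ≤ ω ^ (i - 1) := h1
  have hlog : Real.log (ε / C) ≤ ((i : ℝ) - 1) * Real.log ω := by
    have := Real.log_le_log (by positivity) heC
    rwa [Real.log_pow, Nat.cast_sub hi, Nat.cast_one] at this
  have hlogdiv : Real.log (ε / C) = - Real.log (C / ε) := by
    rw [Real.log_div hε.ne' hCpos.ne', Real.log_div hCpos.ne' hε.ne']
    ring
  have hineq : ((i : ℝ) - 1) * |Real.log ω| ≤ Real.log (C / ε) := by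
    rw [habs]
    nlinarith [hlog, hlogdiv]
  have habspos : 0 < |Real.log ω| := by rw [habs]; linarith
  have : (i : ℝ) - 1 ≤ Real.log (C / ε) / |Real.log ω| := by
    rw [le_div_iff₀ habspos]; exact hineq
  rw [one_div, ← div_eq_inv_mul]
  linarith
end
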